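/- On the positive orthant of ℝⁿ with r^p = Σᵢ xᵢ^p (p > 0), for any C² function f : (0,∞) → ℝ and real m ≠ 0, the function u(x) = f(r^m) satisfies L u = m² t² f''(t) + m(m + 2φ) t f'(t) + λ f(t) evaluated at t = r^m, where L u = Σᵢ (r/xᵢ)^p [xᵢ² ∂²u/∂xᵢ² + αᵢ xᵢ ∂u/∂xᵢ] + λ u and 2φ = -p + n(p-1) + Σᵢ αᵢ. In particular, u = f(r^m) solves L u = 0 if and only if f satisfies the Euler ODE m² t² f'' + m(m+2φ) t f' + λ f = 0. -/

import Mathlib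

open Real Set

/-- Partial derivative in the `i`-th coordinate. -/
noncomputable def pd {n : ℕ} (i : Fin n) (u : (Fin n → ℝ) → ℝ) (x : Fin n → ℝ) : ℝ :=
  deriv (fun t => u (Function.update x i t)) (x i)

/-- `r x = (x₁^p + ⋯ + xₙ^p)^(1/p)`. -/
noncomputable def rad {n : ℕ} (p : ℝ) (x : Fin n → ℝ) : ℝ :=
  (∑ i, x i ^ p) ^ (1 / p)

/-- The singular operator `L`. -/
noncomputable def Lop {n : ℕ} (p : ℝ) (α : Fin n → ℝ) (lam : ℝ)
    (u : (Fin n → ℝ) → ℝ) : (Fin n → ℝ) → ℝ :=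
  fun x => (∑ i, (rad p x / x i) ^ p *
      ((x i) ^ 2 * pd i (fun y => pd i u y) x + α i * x i * pd i u x)) + lam * u x

/-!
Write `S = ∑ xᵢ ^ p`, so that `u = g S` with `g S = f (S ^ k)` and `m = p k`. The chain
rule along each coordinate line gives `∂ᵢu = p xᵢ^(p-1) g'(S)`, and since
`(r / xᵢ)^p = S / xᵢ^p`, the weights in `L` turn the sum over `i` into
`p² S² g''(S) + p (n (p - 1) + ∑ αᵢ) S g'(S)`. For `g = f ∘ (· ^ k)` one has `S g' = k t f'`
and `S² g'' = k² t² f'' + k (k - 1) t f'` at `t = S ^ k`, which yields the Euler operator.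
For the equivalence, every `t > 0` is `r ^ m` at some point of the diagonal of the orthant.
-/

open Filter Topology

section PowerSubstitution

variable {f : ℝ → ℝ} {k S : ℝ}

lemma hasDerivAt_comp_rpow (hf : DifferentiableOn ℝ f (Ioi 0)) (hS : 0 < S) :
    HasDerivAt (fun S => f (S ^ k)) (deriv f (S ^ k) * (k * S ^ (k - 1))) S :=
  (hf.differentiableAt (Ioi_mem_nhds (rpow_pos_of_pos hS k))).hasDerivAt.comp S
    (hasDerivAt_rpow_const (Or.inl hS.ne'))

lemma contDiffOn_comp_rpow (hf : ContDiffOn ℝ 2 f (Ioi 0)) :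
    ContDiffOn ℝ 2 (fun S => f (S ^ k)) (Ioi 0) :=
  hf.comp (fun _ hS => (contDiffAt_rpow_const_of_ne (ne_of_gt hS)).contDiffWithinAt)
    fun _ hS => rpow_pos_of_pos hS k

lemma mul_deriv_comp_rpow (hf : DifferentiableOn ℝ f (Ioi 0)) (hS : 0 < S) :
    S * deriv (fun S => f (S ^ k)) S = k * S ^ k * deriv f (S ^ k) := by
  rw [(hasDerivAt_comp_rpow hf hS).deriv, rpow_sub_one hS.ne']
  field_simp

lemma sq_mul_deriv_deriv_comp_rpow (hf : ContDiffOn ℝ 2 f (Ioi 0)) (hS : 0 < S) :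
    S ^ 2 * deriv (deriv fun S => f (S ^ k)) S
      = k ^ 2 * (S ^ k) ^ 2 * deriv (deriv f) (S ^ k) + k * (k - 1) * S ^ k * deriv f (S ^ k) := by
  have hf1 : DifferentiableOn ℝ f (Ioi 0) := hf.differentiableOn (by norm_num)
  have hf2 : DifferentiableOn ℝ (deriv f) (Ioi 0) :=
    (hf.deriv_of_isOpen isOpen_Ioi (m := 1) (by norm_num)).differentiableOn one_ne_zero
  have hderiv :
      deriv (fun S => f (S ^ k)) =ᶠ[𝓝 S] fun S => deriv f (S ^ k) * (k * S ^ (k - 1)) := by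
    filter_upwards [Ioi_mem_nhds hS] with S' hS'
    exact (hasDerivAt_comp_rpow hf1 hS').deriv
  rw [hderiv.deriv_eq, ((hasDerivAt_comp_rpow hf2 hS).fun_mul
    ((hasDerivAt_rpow_const (Or.inl hS.ne')).const_mul k)).deriv]
  simp only [rpow_sub_one hS.ne']
  field_simp

end PowerSubstitution

section FunctionsOfPowerSum

variable {n : ℕ} {p : ℝ}

lemma sum_rpow_update (x : Fin n → ℝ) (i : Fin n) (s : ℝ) :
    ∑ j, Function.update x i s j ^ p = s ^ p + ∑ j ∈ Finset.univ \ {i}, x j ^ p :=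
  calc ∑ j, Function.update x i s j ^ p
      = ∑ j, Function.update (fun j => x j ^ p) i (s ^ p) j :=
        Finset.sum_congr rfl fun j _ => Function.apply_update (fun _ v => v ^ p) x i s j
    _ = s ^ p + ∑ j ∈ Finset.univ \ {i}, x j ^ p :=
        Finset.sum_update_of_mem (Finset.mem_univ i) _ _

lemma sum_rpow_eq_rpow_add (x : Fin n → ℝ) (i : Fin n) :
    ∑ j, x j ^ p = x i ^ p + ∑ j ∈ Finset.univ \ {i}, x j ^ p := by
  rw [← sum_rpow_update x i (x i), Function.update_eq_self]

lemma eventually_update_pos {x : Fin n → ℝ} (hx : ∀ j, 0 < x j) (i : Fin n) :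
    ∀ᶠ s in 𝓝 (x i), ∀ j, 0 < Function.update x i s j := by
  filter_upwards [Ioi_mem_nhds (hx i)] with s hs j
  rcases eq_or_ne j i with rfl | hj
  · rwa [Function.update_self]
  · rw [Function.update_of_ne hj]
    exact hx j

lemma hasDerivAt_comp_rpow_add {h : ℝ → ℝ} {C s : ℝ} (hs : 0 < s)
    (hh : DifferentiableAt ℝ h (s ^ p + C)) :
    HasDerivAt (fun s => h (s ^ p + C)) (deriv h (s ^ p + C) * (p * s ^ (p - 1))) s :=
  hh.hasDerivAt.comp s ((hasDerivAt_rpow_const (Or.inl hs.ne')).add_const C)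

-- Agreement is only asked on the open orthant: off it `rad p y ^ m` and `(∑ yⱼ ^ p) ^ (m / p)`
-- may differ, as real powers of negative numbers are junk values.
variable {u : (Fin n → ℝ) → ℝ} {g : ℝ → ℝ} {x : Fin n → ℝ}

lemma pd_eq_of_eq_comp_sum_rpow (hu : ∀ y, (∀ j, 0 < y j) → u y = g (∑ j, y j ^ p))
    (hg : DifferentiableOn ℝ g (Ioi 0)) (hx : ∀ j, 0 < x j) (i : Fin n) :
    pd i u x = deriv g (∑ j, x j ^ p) * (p * x i ^ (p - 1)) := by
  set C := ∑ j ∈ Finset.univ \ {i}, x j ^ p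
  have hpos : 0 < x i ^ p + C := add_pos_of_pos_of_nonneg (rpow_pos_of_pos (hx i) p)
    (Finset.sum_nonneg fun j _ => (rpow_pos_of_pos (hx j) p).le)
  have hline : (fun s => u (Function.update x i s)) =ᶠ[𝓝 (x i)] fun s => g (s ^ p + C) := by
    filter_upwards [eventually_update_pos hx i] with s hs
    rw [hu _ hs, sum_rpow_update]
  rw [pd, hline.deriv_eq, sum_rpow_eq_rpow_add x i]
  exact (hasDerivAt_comp_rpow_add (hx i) (hg.differentiableAt (Ioi_mem_nhds hpos))).deriv

lemma pd_pd_eq_of_eq_comp_sum_rpow (hu : ∀ y, (∀ j, 0 < y j) → u y = g (∑ j, y j ^ p))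
    (hg : ContDiffOn ℝ 2 g (Ioi 0)) (hx : ∀ j, 0 < x j) (i : Fin n) :
    pd i (pd i u) x
      = deriv (deriv g) (∑ j, x j ^ p) * (p * x i ^ (p - 1)) ^ 2
        + deriv g (∑ j, x j ^ p) * (p * (p - 1) * x i ^ (p - 2)) := by
  have hg1 : DifferentiableOn ℝ g (Ioi 0) := hg.differentiableOn (by norm_num)
  have hg2 : DifferentiableOn ℝ (deriv g) (Ioi 0) :=
    (hg.deriv_of_isOpen isOpen_Ioi (m := 1) (by norm_num)).differentiableOn one_ne_zero
  set C := ∑ j ∈ Finset.univ \ {i}, x j ^ p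
  have hpos : 0 < x i ^ p + C := add_pos_of_pos_of_nonneg (rpow_pos_of_pos (hx i) p)
    (Finset.sum_nonneg fun j _ => (rpow_pos_of_pos (hx j) p).le)
  have hline : (fun s => pd i u (Function.update x i s))
      =ᶠ[𝓝 (x i)] fun s => deriv g (s ^ p + C) * (p * s ^ (p - 1)) := by
    filter_upwards [eventually_update_pos hx i] with s hs
    rw [pd_eq_of_eq_comp_sum_rpow hu hg1 hs, sum_rpow_update, Function.update_self]
  have hpow : HasDerivAt (fun s => p * s ^ (p - 1)) (p * ((p - 1) * x i ^ (p - 1 - 1))) (x i) :=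
    (hasDerivAt_rpow_const (Or.inl (hx i).ne')).const_mul p
  rw [pd, hline.deriv_eq, sum_rpow_eq_rpow_add x i, ((hasDerivAt_comp_rpow_add (hx i)
    (hg2.differentiableAt (Ioi_mem_nhds hpos))).fun_mul hpow).deriv, show p - 1 - 1 = p - 2 by ring]
  ring

lemma Lop_summand_eq {S y A B a : ℝ} (hp : p ≠ 0) (hS : 0 ≤ S) (hy : 0 < y) :
    (S ^ (1 / p) / y) ^ p
        * (y ^ 2 * (A * (p * y ^ (p - 1)) ^ 2 + B * (p * (p - 1) * y ^ (p - 2)))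
          + a * y * (B * (p * y ^ (p - 1))))
      = p ^ 2 * S * A * y ^ p + p * S * B * (p - 1) + p * S * B * a := by
  have hweight : (S ^ (1 / p) / y) ^ p = S / y ^ p := by
    rw [div_rpow (rpow_nonneg hS _) hy.le, one_div, rpow_inv_rpow hS hp]
  rw [hweight, show p - 2 = p - 1 - 1 by ring]
  simp only [rpow_sub_one hy.ne']
  have := rpow_pos_of_pos hy p
  field_simp

theorem Lop_eq_of_eq_comp_sum_rpow (hp : p ≠ 0) (α : Fin n → ℝ) (lam : ℝ)
    (hu : ∀ y, (∀ j, 0 < y j) → u y = g (∑ j, y j ^ p))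
    (hg : ContDiffOn ℝ 2 g (Ioi 0)) (hx : ∀ j, 0 < x j) :
    Lop p α lam u x
      = p ^ 2 * (∑ j, x j ^ p) ^ 2 * deriv (deriv g) (∑ j, x j ^ p)
        + p * (n * (p - 1) + ∑ i, α i) * (∑ j, x j ^ p) * deriv g (∑ j, x j ^ p)
        + lam * g (∑ j, x j ^ p) := by
  have hS : 0 ≤ ∑ j, x j ^ p := Finset.sum_nonneg fun j _ => (rpow_pos_of_pos (hx j) p).le
  have hterm (i : Fin n) := Lop_summand_eq (A := deriv (deriv g) (∑ j, x j ^ p))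
    (B := deriv g (∑ j, x j ^ p)) (a := α i) hp hS (hx i)
  simp only [Lop, rad, pd_pd_eq_of_eq_comp_sum_rpow hu hg hx,
    pd_eq_of_eq_comp_sum_rpow hu (hg.differentiableOn (by norm_num)) hx, hterm,
    Finset.sum_add_distrib, ← Finset.mul_sum, Finset.sum_const, Finset.card_univ,
    Fintype.card_fin, nsmul_eq_mul, hu x hx]
  ring

lemma rad_rpow_mul (hp : p ≠ 0) (k : ℝ) {x : Fin n → ℝ} (hS : 0 ≤ ∑ j, x j ^ p) :
    rad p x ^ (p * k) = (∑ j, x j ^ p) ^ k := by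
  rw [rad, ← rpow_mul hS]
  field_simp

lemma rad_const (hp : p ≠ 0) {c : ℝ} (hc : 0 ≤ c) :
    rad p (fun _ : Fin n => c) = (n : ℝ) ^ p⁻¹ * c := by
  rw [rad, Finset.sum_const, Finset.card_univ, Fintype.card_fin, nsmul_eq_mul, one_div,
    mul_rpow n.cast_nonneg (rpow_nonneg hc p), rpow_rpow_inv hc hp]

lemma exists_rad_rpow_eq (hn : 0 < n) (hp : p ≠ 0) {m t : ℝ} (hm : m ≠ 0) (ht : 0 < t) :
    ∃ x : Fin n → ℝ, (∀ i, 0 < x i) ∧ rad p x ^ m = t := by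
  have hn' : (0 : ℝ) < n := Nat.cast_pos.2 hn
  have hc : 0 < t ^ m⁻¹ / (n : ℝ) ^ p⁻¹ :=
    div_pos (rpow_pos_of_pos ht _) (rpow_pos_of_pos hn' _)
  refine ⟨fun _ => t ^ m⁻¹ / (n : ℝ) ^ p⁻¹, fun _ => hc, ?_⟩
  rw [rad_const hp hc.le, mul_div_cancel₀ _ (rpow_pos_of_pos hn' _).ne', rpow_inv_rpow ht.le hm]

lemma sum_rpow_pos (hn : 0 < n) {x : Fin n → ℝ} (hx : ∀ j, 0 < x j) : 0 < ∑ j, x j ^ p :=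
  Finset.sum_pos (fun j _ => rpow_pos_of_pos (hx j) p) ⟨⟨0, hn⟩, Finset.mem_univ _⟩

theorem Lop_comp_rad_rpow (hn : 0 < n) (hp : p ≠ 0) (α : Fin n → ℝ) (lam m : ℝ)
    {f : ℝ → ℝ} (hf : ContDiffOn ℝ 2 f (Ioi 0)) {x : Fin n → ℝ} (hx : ∀ j, 0 < x j) :
    Lop p α lam (fun y => f (rad p y ^ m)) x
      = m ^ 2 * (rad p x ^ m) ^ 2 * deriv (deriv f) (rad p x ^ m)
        + m * (m - p + n * (p - 1) + ∑ i, α i) * rad p x ^ m * deriv f (rad p x ^ m)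
        + lam * f (rad p x ^ m) := by
  obtain ⟨k, rfl⟩ : ∃ k, m = p * k := ⟨m / p, by field_simp⟩
  have hu (y : Fin n → ℝ) (hy : ∀ j, 0 < y j) :
      f (rad p y ^ (p * k)) = f ((∑ j, y j ^ p) ^ k) :=
    congr_arg f (rad_rpow_mul hp k (sum_rpow_pos hn hy).le)
  have hS : 0 < ∑ j, x j ^ p := sum_rpow_pos hn hx
  have h1 := mul_deriv_comp_rpow (k := k) (hf.differentiableOn (by norm_num)) hS
  have h2 := sq_mul_deriv_deriv_comp_rpow (k := k) hf hS
  rw [Lop_eq_of_eq_comp_sum_rpow hp α lam hu (contDiffOn_comp_rpow hf) hx,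
    rad_rpow_mul hp k hS.le]
  linear_combination p ^ 2 * h2 + p * (n * (p - 1) + ∑ i, α i) * h1

end FunctionsOfPowerSum

theorem stmt15 {n : ℕ} (hn : 0 < n) (p : ℝ) (hp : 0 < p) (α : Fin n → ℝ) (lam : ℝ)
    (φ : ℝ) (hφ : 2 * φ = -p + n * (p - 1) + ∑ i, α i)
    (m : ℝ) (hm : m ≠ 0) (f : ℝ → ℝ) (hf : ContDiffOn ℝ 2 f (Ioi (0 : ℝ))) :
    (∀ x : Fin n → ℝ, (∀ i, 0 < x i) →
        Lop p α lam (fun y => f (rad p y ^ m)) x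
          = m ^ 2 * (rad p x ^ m) ^ 2 * deriv (deriv f) (rad p x ^ m)
            + m * (m + 2 * φ) * (rad p x ^ m) * deriv f (rad p x ^ m)
            + lam * f (rad p x ^ m)) ∧
    ((∀ x : Fin n → ℝ, (∀ i, 0 < x i) → Lop p α lam (fun y => f (rad p y ^ m)) x = 0) ↔
      (∀ t : ℝ, 0 < t →
        m ^ 2 * t ^ 2 * deriv (deriv f) t + m * (m + 2 * φ) * t * deriv f t
          + lam * f t = 0)) := by
  have hL (x : Fin n → ℝ) (hx : ∀ i, 0 < x i) :
      Lop p α lam (fun y => f (rad p y ^ m)) x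
        = m ^ 2 * (rad p x ^ m) ^ 2 * deriv (deriv f) (rad p x ^ m)
          + m * (m + 2 * φ) * (rad p x ^ m) * deriv f (rad p x ^ m)
          + lam * f (rad p x ^ m) := by
    linear_combination Lop_comp_rad_rpow hn hp.ne' α lam m hf hx
      - m * rad p x ^ m * deriv f (rad p x ^ m) * hφ
  refine ⟨hL, fun h t ht => ?_, fun h x hx => ?_⟩
  · obtain ⟨x, hx, rfl⟩ := exists_rad_rpow_eq hn hp.ne' hm ht
    rw [← hL x hx]
    exact h x hx
  · rw [hL x hx]
    exact h _ (rpow_pos_of_pos (rpow_pos_of_pos (sum_rpow_pos hn hx) _) m)
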